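/- Let A and B be finite types and let a₀, a₁ : A → B → B → ℂ satisfy the pointwise identity a₀ i j l * conj (a₀ i q r) = a₁ i j l * conj (a₁ i q r) for all i : A and j, l, q, r : B. Then there exists a function s : A → ℂ such that s i * a₀ i j l = a₁ i j l for all i : A and j, l : B. Consequently the diagonal matrix S with entries S i i = s i satisfies (S ⊗ I).mulVec ψ₀(φ) = ψ₁(φ) for every φ : B → ℂ, where ψ_b(φ) (i, j) = ∑_{l : B} a_b i j l * φ l. -/

import Mathlib

open scoped ComplexOrder
open Matrix

noncomputable section

/-- Partial trace over `A` of the outer product `|ψ⟩⟨ψ|`: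
`(ptrA ψ) j q = ∑ i, ψ (i, j) * conj (ψ (i, q))`. -/
def ptrA {A B : Type*} [Fintype A] (ψ : A × B → ℂ) : Matrix B B ℂ :=
  fun j q => ∑ i : A, ψ (i, j) * (starRingEnd ℂ) (ψ (i, q))

/-- The Kronecker product `S ⊗ I` with the identity on `B`, as a matrix on `A × B`. -/
def kronId {A B : Type*} [DecidableEq B] (S : Matrix A A ℂ) : Matrix (A × B) (A × B) ℂ :=
  Matrix.kroneckerMap (· * ·) S (1 : Matrix B B ℂ)

/-- `ptrA ψ` is a Gram matrix, hence positive semidefinite. -/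
lemma ptrA_posSemidef {A B : Type*} [Fintype A] [Fintype B] (ψ : A × B → ℂ) :
    (ptrA ψ).PosSemidef := by
  set V : Matrix A B ℂ := Matrix.of fun i j => (starRingEnd ℂ) (ψ (i, j)) with hV
  have h := Matrix.posSemidef_conjTranspose_mul_self V
  have heq : ptrA ψ = Vᴴ * V := by
    ext j q
    simp [Matrix.mul_apply, Matrix.conjTranspose_apply, ptrA, hV, mul_comm]
  rw [heq]; exact h

namespace Matrix.PosSemidef

/-- The square root of a positive semidefinite matrix, as defined in the older Mathlib
(removed upstream). -/
def sqrt {n : Type*} [Fintype n] [DecidableEq n] {A : Matrix n n ℂ} (hA : A.PosSemidef) :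
    Matrix n n ℂ :=
  hA.1.eigenvectorUnitary.1 * diagonal ((↑) ∘ (√·) ∘ hA.1.eigenvalues) *
    (star hA.1.eigenvectorUnitary : Matrix n n ℂ)

lemma posSemidef_sqrt {n : Type*} [Fintype n] [DecidableEq n] {A : Matrix n n ℂ}
    (hA : A.PosSemidef) : hA.sqrt.PosSemidef := by
  have hd : (diagonal ((↑) ∘ (√·) ∘ hA.1.eigenvalues) : Matrix n n ℂ).PosSemidef :=
    posSemidef_diagonal_iff.mpr fun i => by
      simp only [Function.comp_apply]
      exact_mod_cast Real.sqrt_nonneg _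
  have h := hd.mul_mul_conjTranspose_same (hA.1.eigenvectorUnitary.1)
  unfold sqrt
  convert h using 2
  simp [Matrix.star_eq_conjTranspose]

end Matrix.PosSemidef

lemma sqrt_mul_mul_sqrt_posSemidef {B : Type*} [Fintype B] [DecidableEq B]
    {ρ σ : Matrix B B ℂ} (hρ : ρ.PosSemidef) (hσ : σ.PosSemidef) :
    (hρ.sqrt * σ * hρ.sqrt).PosSemidef := by
  have h := hσ.mul_mul_conjTranspose_same hρ.sqrt
  rwa [hρ.posSemidef_sqrt.isHermitian.eq] at h

/-- The fidelity `F(ρ, σ) = tr √(√ρ * σ * √ρ)` of two positive semidefinite matrices. -/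
def fidelity {B : Type*} [Fintype B] [DecidableEq B] {ρ σ : Matrix B B ℂ}
    (hρ : ρ.PosSemidef) (hσ : σ.PosSemidef) : ℝ :=
  ((sqrt_mul_mul_sqrt_posSemidef hρ hσ).sqrt.trace).re

theorem exists_mul_eq_of_mul_star_eq {K ι : Type*} [Field K] [StarRing K] {x y : ι → K}
    (h : ∀ j q, x j * star (x q) = y j * star (y q)) : ∃ c : K, ∀ j, c * x j = y j := by
  by_cases hy : ∃ q, y q ≠ 0
  · obtain ⟨q, hq⟩ := hy
    refine ⟨star (x q) / star (y q), fun j => ?_⟩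
    rw [div_mul_eq_mul_div, div_eq_iff (star_ne_zero.mpr hq), mul_comm, h]
  · push Not at hy
    exact ⟨0, fun j => by rw [zero_mul, hy]⟩

lemma kronId_diagonal {A B : Type*} [DecidableEq A] [DecidableEq B] (s : A → ℂ) :
    (kronId (diagonal s) : Matrix (A × B) (A × B) ℂ) = diagonal fun p => s p.1 := by
  rw [kronId, ← diagonal_one, kroneckerMap_diagonal_diagonal _ (fun _ => zero_mul _)
    (fun _ => mul_zero _)]
  simp_rw [mul_one]

/-- From the pointwise coefficient identity one obtains a function `s` with
`s i * a₀ i j l = a₁ i j l`, and the diagonal matrix `S = diagonal s` maps the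
commitment of `0` to the commitment of `1` via `S ⊗ I`. -/
theorem exists_diag_transform_of_pointwise_identity
    {A B : Type*} [Fintype A] [Fintype B] [DecidableEq A] [DecidableEq B]
    (a₀ a₁ : A → B → B → ℂ)
    (h : ∀ (i : A) (j l q r : B),
      a₀ i j l * (starRingEnd ℂ) (a₀ i q r) = a₁ i j l * (starRingEnd ℂ) (a₁ i q r)) :
    ∃ s : A → ℂ,
      (∀ (i : A) (j l : B), s i * a₀ i j l = a₁ i j l) ∧
      (∀ φ : B → ℂ,
        (kronId (Matrix.diagonal s)).mulVec (fun p => ∑ l : B, a₀ p.1 p.2 l * φ l) =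
        (fun p => ∑ l : B, a₁ p.1 p.2 l * φ l)) := by
  choose s hs using fun i => exists_mul_eq_of_mul_star_eq (x := fun p : B × B => a₀ i p.1 p.2)
    (y := fun p => a₁ i p.1 p.2) fun p p' => h i p.1 p.2 p'.1 p'.2
  have hs' (i : A) (j l : B) : s i * a₀ i j l = a₁ i j l := hs i (j, l)
  refine ⟨s, hs', fun φ => funext fun p => ?_⟩
  rw [kronId_diagonal, mulVec_diagonal, Finset.mul_sum]
  simp_rw [← mul_assoc, hs']
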